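/- Let A = (a_{ij}) ∈ (𝕊max^∨)^{n×n} be TPD with diagonal entries d₁, …, dₙ. Then a signed element γ ∈ 𝕊max^∨ satisfies det(γ⊙I ⊖ A) ∇ 𝟘 (i.e. γ is an 𝕊max-eigenvalue of A) if and only if γ = d_i for some i ∈ [n]; moreover the characteristic polynomial function of A factors as det(x⊙I ⊖ A) = (x ⊖ d₁) ⊙ (x ⊖ d₂) ⊙ ⋯ ⊙ (x ⊖ dₙ) for every x ∈ 𝕊max. -/

import Mathlib

/-!
Common framework: the symmetrized tropical semiring 𝕊max over a linearly
ordered abelian group Γ, represented concretely: an element is either 𝟘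
(represented by `none`) or a pair of a modulus `c : Γ` and a sign
(positive, negative or balanced), matching the classes of the quotient
𝕋max²/ℛ described in the paper.
-/

namespace TropPaper

inductive SSign : Type
  | pos
  | neg
  | bal
  deriving DecidableEq

/-- The symmetrized tropical semiring 𝕊max(Γ): `none` is 𝟘, and
`some (c, s)` is the class of modulus `c` and sign `s`. -/
def Smax (Γ : Type) : Type := Option (Γ × SSign)

/-- Γ is divisible. -/
def DivisibleGrp (Γ : Type) [AddCommGroup Γ] : Prop :=
  ∀ k : ℕ, 0 < k → ∀ a : Γ, ∃ b : Γ, k • b = a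

section Defs

variable {Γ : Type} [AddCommGroup Γ] [LinearOrder Γ] [IsOrderedAddMonoid Γ]

/-- 𝟘 -/
def szero : Smax Γ := none

/-- 𝟙 -/
def sone : Smax Γ := some ((0 : Γ), SSign.pos)

/-- modulus |·| : 𝕊max → 𝕋max = WithBot Γ -/
def smod : Smax Γ → WithBot Γ
  | none => ⊥
  | some (c, _) => (c : WithBot Γ)

def sgnMul : SSign → SSign → SSign
  | SSign.pos, t => t
  | SSign.neg, SSign.pos => SSign.neg
  | SSign.neg, SSign.neg => SSign.pos
  | SSign.neg, SSign.bal => SSign.bal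
  | SSign.bal, _ => SSign.bal

/-- ⊕ on 𝕊max -/
def sadd : Smax Γ → Smax Γ → Smax Γ
  | none, b => b
  | some a, none => some a
  | some (c, s), some (d, t) =>
      if c < d then some (d, t)
      else if d < c then some (c, s)
      else some (c, if s = t then s else SSign.bal)

/-- ⊖ (unary) on 𝕊max -/
def sneg : Smax Γ → Smax Γ
  | none => none
  | some (c, SSign.pos) => some (c, SSign.neg)
  | some (c, SSign.neg) => some (c, SSign.pos)
  | some (c, SSign.bal) => some (c, SSign.bal)

/-- ⊙ on 𝕊max -/
def smul : Smax Γ → Smax Γ → Smax Γ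
  | none, _ => none
  | some _, none => none
  | some (c, s), some (d, t) => some (c + d, sgnMul s t)

/-- a ⊖ b -/
def ssub (a b : Smax Γ) : Smax Γ := sadd a (sneg b)

/-- a° = a ⊖ a -/
def sbal (a : Smax Γ) : Smax Γ := ssub a a

/-- the positive element with the same modulus (|·| seen inside 𝕊max⊕) -/
def sabs : Smax Γ → Smax Γ
  | none => none
  | some (c, _) => some (c, SSign.pos)

/-- multiplicative inverse (of invertible, i.e. signed nonzero, elements) -/
def sinv : Smax Γ → Smax Γ
  | none => none
  | some (c, s) => some (-c, s)

/-- a^{⊙k} -/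
def spow (a : Smax Γ) : ℕ → Smax Γ
  | 0 => sone
  | k + 1 => smul a (spow a k)

/-- membership in 𝕊max° (balanced elements together with 𝟘) -/
def IsBal : Smax Γ → Prop
  | none => True
  | some (_, s) => s = SSign.bal

/-- membership in 𝕊max⊕ (positive elements together with 𝟘) -/
def IsPos : Smax Γ → Prop
  | none => True
  | some (_, s) => s = SSign.pos

/-- membership in 𝕊max^∨ (signed elements) -/
def IsSigned : Smax Γ → Prop
  | none => True
  | some (_, s) => s ≠ SSign.bal

/-- the balance relation a ∇ b -/
def Balance (a b : Smax Γ) : Prop := IsBal (ssub a b)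

/-- a ⪯ b -/
def natLe (a b : Smax Γ) : Prop := sadd a b = b

/-- a ≤ b :⟺ b ⊖ a ∈ 𝕊max⊕ ∪ 𝕊max° -/
def sle (a b : Smax Γ) : Prop := IsPos (ssub b a) ∨ IsBal (ssub b a)

/-- a < b :⟺ b ⊖ a ∈ 𝕊max⊕ ∖ {𝟘} -/
def slt (a b : Smax Γ) : Prop := IsPos (ssub b a) ∧ ssub b a ≠ szero

/-- finite ⊕-sum over a list -/
def sumS {α : Type} (l : List α) (f : α → Smax Γ) : Smax Γ :=
  (l.map f).foldr sadd szero

/-- finite ⊙-product over a list -/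
def prodS {α : Type} (l : List α) (f : α → Smax Γ) : Smax Γ :=
  (l.map f).foldr smul sone

/-- the zero vector -/
def zeroVecS {n : ℕ} : Fin n → Smax Γ := fun _ => szero

def VecSigned {n : ℕ} (x : Fin n → Smax Γ) : Prop := ∀ i, IsSigned (x i)

def MatSigned {n : ℕ} (A : Matrix (Fin n) (Fin n) (Smax Γ)) : Prop :=
  ∀ i j, IsSigned (A i j)

def SymmS {n : ℕ} (A : Matrix (Fin n) (Fin n) (Smax Γ)) : Prop :=
  ∀ i j, A i j = A j i

/-- A ⊙ v -/
def matVecS {n : ℕ} (A : Matrix (Fin n) (Fin n) (Smax Γ)) (v : Fin n → Smax Γ) :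
    Fin n → Smax Γ :=
  fun i => sumS (List.finRange n) fun j => smul (A i j) (v j)

/-- A ⊙ B -/
def matMulS {n : ℕ} (A B : Matrix (Fin n) (Fin n) (Smax Γ)) :
    Matrix (Fin n) (Fin n) (Smax Γ) :=
  Matrix.of fun i j => sumS (List.finRange n) fun l => smul (A i l) (B l j)

/-- the identity matrix I -/
def idMatS {n : ℕ} : Matrix (Fin n) (Fin n) (Smax Γ) :=
  Matrix.of fun i j => if i = j then sone else szero

/-- xᵀ ⊙ A ⊙ x -/
def quadFormS {n : ℕ} (A : Matrix (Fin n) (Fin n) (Smax Γ)) (x : Fin n → Smax Γ) :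
    Smax Γ :=
  sumS (List.finRange n) fun i => sumS (List.finRange n) fun j =>
    smul (x i) (smul (A i j) (x j))

/-- tropical positive definiteness (the quadratic-form condition) -/
def TPD {n : ℕ} (A : Matrix (Fin n) (Fin n) (Smax Γ)) : Prop :=
  ∀ x : Fin n → Smax Γ, VecSigned x → x ≠ zeroVecS → slt szero (quadFormS A x)

/-- tropical positive semidefiniteness -/
def TPSD {n : ℕ} (A : Matrix (Fin n) (Fin n) (Smax Γ)) : Prop :=
  ∀ x : Fin n → Smax Γ, VecSigned x → x ≠ zeroVecS → sle szero (quadFormS A x)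

/-- sgn(π) ∈ {𝟙, ⊖𝟙} -/
def permSignS {n : ℕ} (π : Equiv.Perm (Fin n)) : Smax Γ :=
  if (Equiv.Perm.sign π : ℤ) = 1 then sone else sneg sone

/-- the determinant over 𝕊max -/
noncomputable def detS {n : ℕ} (M : Matrix (Fin n) (Fin n) (Smax Γ)) : Smax Γ :=
  sumS (Finset.univ : Finset (Equiv.Perm (Fin n))).toList fun π =>
    smul (permSignS π) (prodS (List.finRange n) fun i => M i (π i))

/-- the adjugate matrix over 𝕊max -/
noncomputable def adjS {n : ℕ} (M : Matrix (Fin (n+1)) (Fin (n+1)) (Smax Γ)) :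
    Matrix (Fin (n+1)) (Fin (n+1)) (Smax Γ) :=
  Matrix.of fun i j =>
    smul (spow (sneg sone) (i.val + j.val))
      (detS (Matrix.of fun a b : Fin n => M (Fin.succAbove j a) (Fin.succAbove i b)))

/-- γ ⊙ I ⊖ A -/
def charMatS {n : ℕ} (γ : Smax Γ) (A : Matrix (Fin n) (Fin n) (Smax Γ)) :
    Matrix (Fin n) (Fin n) (Smax Γ) :=
  Matrix.of fun i j => ssub (smul γ (idMatS i j)) (A i j)

/-- tr_k(A) = ⊕_{|K| = k} det(A[K,K]) -/
noncomputable def trkS {n : ℕ} (k : ℕ) (A : Matrix (Fin n) (Fin n) (Smax Γ)) : Smax Γ :=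
  sumS ((Finset.univ : Finset (Fin n)).powersetCard k).attach.toList fun K =>
    detS (Matrix.of fun a b : Fin k =>
      A (K.1.orderEmbOfFin (Finset.mem_powersetCard.mp K.2).2 a)
        (K.1.orderEmbOfFin (Finset.mem_powersetCard.mp K.2).2 b))

/-- matrix power A^{⊙k} -/
def matPowS {n : ℕ} (A : Matrix (Fin n) (Fin n) (Smax Γ)) :
    ℕ → Matrix (Fin n) (Fin n) (Smax Γ)
  | 0 => idMatS
  | k + 1 => matMulS A (matPowS A k)

/-- partial Kleene sums I ⊕ A ⊕ ⋯ ⊕ A^{⊙m} -/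
def starPartialS {n : ℕ} (A : Matrix (Fin n) (Fin n) (Smax Γ)) (m : ℕ) :
    Matrix (Fin n) (Fin n) (Smax Γ) :=
  Matrix.of fun i j => sumS (List.range (m+1)) fun k => matPowS A k i j

/-- the diagonal matrix D^(k) with diagonal (γ₁,…,γ_{k−1},𝟘,…,𝟘) (0-based k) -/
def DmatS {n : ℕ} (A : Matrix (Fin n) (Fin n) (Smax Γ)) (k : Fin n) :
    Matrix (Fin n) (Fin n) (Smax Γ) :=
  Matrix.of fun i j => if i = j ∧ i < k then A i i else szero

/-- the complementary matrix A^(k) -/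
def AmatS {n : ℕ} (A : Matrix (Fin n) (Fin n) (Smax Γ)) (k : Fin n) :
    Matrix (Fin n) (Fin n) (Smax Γ) :=
  Matrix.of fun i j => if i ≠ j ∨ k ≤ i then A i j else szero

/-- M = (γ⊙I ⊖ D^(k))^{⊙−1} ⊙ A^(k) -/
def MmatS {n : ℕ} (A : Matrix (Fin n) (Fin n) (Smax Γ)) (k : Fin n) :
    Matrix (Fin n) (Fin n) (Smax Γ) :=
  Matrix.of fun i j =>
    smul (sinv (if i < k then sneg (A i i) else A k k)) (AmatS A k i j)

/-- λ_k = (⊖𝟙)^{⊙(k−1)} ⊙ γ₁ ⊙ ⋯ ⊙ γ_{k−1} ⊙ γ^{⊙(n−k)} (0-based k, size n) -/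
def lamkS {n : ℕ} (A : Matrix (Fin n) (Fin n) (Smax Γ)) (k : Fin n) : Smax Γ :=
  smul (spow (sneg sone) k.val)
    (smul (prodS ((List.finRange n).filter (fun i => i < k)) fun i => A i i)
      (spow (A k k) (n - 1 - k.val)))

/-- irreducibility: the digraph of nonzero entries is strongly connected -/
def IrreducibleS {n : ℕ} (A : Matrix (Fin n) (Fin n) (Smax Γ)) : Prop :=
  ∀ i j : Fin n, Relation.ReflTransGen (fun a b => A a b ≠ szero) i j

/-- diagonal entries sorted non-increasingly for ⪯ -/
def DiagSortedS {n : ℕ} (A : Matrix (Fin n) (Fin n) (Smax Γ)) : Prop :=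
  ∀ i j : Fin n, i ≤ j → natLe (A j j) (A i i)

/-! 𝕋max-side notions (for the characteristic polynomial of |A|). -/

/-- finite max over a list in 𝕋max -/
def sumT {α : Type} (l : List α) (f : α → WithBot Γ) : WithBot Γ :=
  (l.map f).foldr max ⊥

/-- finite ⊙-product over a list in 𝕋max -/
def prodT {α : Type} (l : List α) (f : α → WithBot Γ) : WithBot Γ :=
  (l.map f).foldr (· + ·) (0 : WithBot Γ)

/-- the permanent over 𝕋max -/
noncomputable def perT {n : ℕ} (M : Matrix (Fin n) (Fin n) (WithBot Γ)) : WithBot Γ :=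
  sumT (Finset.univ : Finset (Equiv.Perm (Fin n))).toList fun π =>
    prodT (List.finRange n) fun i => M i (π i)

/-- coefficient of X^k in the 𝕋max-characteristic polynomial of B -/
noncomputable def charCoeffT {n : ℕ} (B : Matrix (Fin n) (Fin n) (WithBot Γ)) (k : ℕ) : WithBot Γ :=
  if k ≤ n then
    sumT ((Finset.univ : Finset (Fin n)).powersetCard (n - k)).attach.toList fun K =>
      perT (Matrix.of fun a b : Fin (n - k) =>
        B (K.1.orderEmbOfFin (Finset.mem_powersetCard.mp K.2).2 a)
          (K.1.orderEmbOfFin (Finset.mem_powersetCard.mp K.2).2 b))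
  else ⊥

/-- multiplicity of x as a 𝕋max-root of the formal polynomial of degree ≤ n
with coefficients Q: for x = ⊥ it is the lower degree, for x = c ∈ Γ it is the
difference between the largest and smallest exponents attaining
max_k (Q_k + k·c). -/
noncomputable def rootMultT (n : ℕ) (Q : ℕ → WithBot Γ) (x : WithBot Γ) : ℕ :=
  WithBot.recBotCoe
    (sInf {k | Q k ≠ ⊥})
    (fun c =>
      sSup {k | k ≤ n ∧ Q k + ((k • c : Γ) : WithBot Γ)
              = sumT (List.range (n+1)) (fun l => Q l + ((l • c : Γ) : WithBot Γ))}
        - sInf {k | k ≤ n ∧ Q k + ((k • c : Γ) : WithBot Γ)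
              = sumT (List.range (n+1)) (fun l => Q l + ((l • c : Γ) : WithBot Γ))})
    x

end Defs

/-- the signed valuation associated with a valuation v on an ordered field L -/
def svMap {Γ : Type} [AddCommGroup Γ] [LinearOrder Γ] [IsOrderedAddMonoid Γ] {L : Type} [Field L] [LinearOrder L] [IsStrictOrderedRing L]
    (v : L → WithBot Γ) (b : L) : Smax Γ :=
  if b = 0 then szero
  else if 0 < b then WithBot.recBotCoe szero (fun c => some (c, SSign.pos)) (v b)
  else WithBot.recBotCoe szero (fun c => some (c, SSign.neg)) (v b)

end TropPaper

/-!
Testing positive definiteness on a unit vector shows that every diagonal entry `dᵢ` is positive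
and nonzero. Testing it on a vector supported on `{i, j}`, scaled so that `xᵢ aᵢᵢ xᵢ` and
`xᵢ aᵢⱼ xⱼ` have the same modulus and opposite signs, shows `2|aᵢⱼ| < |dᵢ| + |dⱼ|` for `i ≠ j`
(otherwise the quadratic form would be balanced). Summing this over the points moved by a
permutation `π ≠ 1` shows that, in `det(x ⊙ I ⊖ A)`, the identity term `⨀ᵢ (x ⊖ dᵢ)` has strictly
larger modulus than every other term, so it absorbs them. Finally a product is balanced iff one
of its factors is, and for signed `γ` the factor `γ ⊖ dᵢ` is balanced iff `γ = dᵢ`.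
-/

namespace TropPaper

section Basic

variable {Γ : Type}

def Smax.mk (c : Γ) (s : SSign) : Smax Γ := some (c, s)

@[simp] theorem Smax.mk_inj {c d : Γ} {s t : SSign} :
    Smax.mk c s = Smax.mk d t ↔ c = d ∧ s = t := by
  rw [← Prod.mk.injEq]; exact Option.some_inj

instance : Zero (Smax Γ) := ⟨szero⟩

theorem Smax.eq_zero_or_mk (a : Smax Γ) : a = 0 ∨ ∃ c s, a = Smax.mk c s := by
  rcases a with _ | ⟨c, s⟩
  exacts [Or.inl rfl, Or.inr ⟨c, s, rfl⟩]

@[simp] theorem smod_mk (c : Γ) (s : SSign) : smod (Smax.mk c s) = c := rfl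
@[simp] theorem isBal_mk {c : Γ} {s : SSign} : IsBal (Smax.mk c s) ↔ s = SSign.bal := Iff.rfl
@[simp] theorem isSigned_mk {c : Γ} {s : SSign} : IsSigned (Smax.mk c s) ↔ s ≠ SSign.bal := Iff.rfl
@[simp] theorem isPos_mk {c : Γ} {s : SSign} : IsPos (Smax.mk c s) ↔ s = SSign.pos := Iff.rfl

@[simp] theorem smod_zero : smod (0 : Smax Γ) = ⊥ := rfl
@[simp] theorem isBal_zero : IsBal (0 : Smax Γ) := trivial
@[simp] theorem isSigned_zero : IsSigned (0 : Smax Γ) := trivial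
@[simp] theorem mk_ne_zero (c : Γ) (s : SSign) : Smax.mk c s ≠ 0 := nofun
@[simp] theorem zero_ne_mk (c : Γ) (s : SSign) : 0 ≠ Smax.mk c s := nofun
@[simp] theorem sneg_zero : sneg (0 : Smax Γ) = 0 := rfl
@[simp] theorem zeroVecS_apply {n : ℕ} (i : Fin n) : (zeroVecS i : Smax Γ) = 0 := rfl

theorem smod_eq_bot_iff {a : Smax Γ} : smod a = ⊥ ↔ a = 0 := by
  obtain rfl | ⟨c, s, rfl⟩ := a.eq_zero_or_mk <;> simp

def SSign.flip : SSign → SSign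
  | SSign.pos => SSign.neg
  | SSign.neg => SSign.pos
  | SSign.bal => SSign.bal

theorem sneg_mk (c : Γ) (s : SSign) : sneg (Smax.mk c s) = Smax.mk c s.flip := by
  cases s <;> rfl

theorem smod_sneg (a : Smax Γ) : smod (sneg a) = smod a := by
  rcases a with _ | ⟨c, _ | _ | _⟩ <;> rfl

end Basic

section Multiplication

variable {Γ : Type} [AddCommGroup Γ]

theorem sgnMul_assoc (s t u : SSign) : sgnMul (sgnMul s t) u = sgnMul s (sgnMul t u) := by
  cases s <;> cases t <;> cases u <;> rfl

theorem sgnMul_comm (s t : SSign) : sgnMul s t = sgnMul t s := by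
  cases s <;> cases t <;> rfl

instance : One (Smax Γ) := ⟨sone⟩

instance : Mul (Smax Γ) := ⟨smul⟩

theorem one_eq_mk : (1 : Smax Γ) = Smax.mk 0 SSign.pos := rfl

theorem mk_mul_mk (c d : Γ) (s t : SSign) :
    Smax.mk c s * Smax.mk d t = Smax.mk (c + d) (sgnMul s t) := rfl

instance : CommMonoidWithZero (Smax Γ) where
  mul_assoc a b c := by
    obtain rfl | ⟨x, s, rfl⟩ := a.eq_zero_or_mk; · rfl
    obtain rfl | ⟨y, t, rfl⟩ := b.eq_zero_or_mk; · rfl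
    obtain rfl | ⟨z, u, rfl⟩ := c.eq_zero_or_mk; · rfl
    simp only [mk_mul_mk, add_assoc, sgnMul_assoc]
  one_mul a := by
    obtain rfl | ⟨c, s, rfl⟩ := a.eq_zero_or_mk; · rfl
    simp only [one_eq_mk, mk_mul_mk, zero_add]; rfl
  mul_one a := by
    obtain rfl | ⟨c, s, rfl⟩ := a.eq_zero_or_mk; · rfl
    simp only [one_eq_mk, mk_mul_mk, add_zero]; cases s <;> rfl
  mul_comm a b := by
    obtain rfl | ⟨c, s, rfl⟩ := a.eq_zero_or_mk <;> obtain rfl | ⟨d, t, rfl⟩ := b.eq_zero_or_mk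
    all_goals first | rfl | simp only [mk_mul_mk, add_comm c, sgnMul_comm s]
  zero_mul _ := rfl
  mul_zero a := by cases a <;> rfl

theorem prodS_eq_prod {n : ℕ} (f : Fin n → Smax Γ) : prodS (List.finRange n) f = ∏ i, f i := by
  rw [Fin.prod_univ_def]; rfl

theorem smod_mul (a b : Smax Γ) : smod (a * b) = smod a + smod b := by
  obtain rfl | ⟨c, s, rfl⟩ := a.eq_zero_or_mk; · simp
  obtain rfl | ⟨d, t, rfl⟩ := b.eq_zero_or_mk; · simp
  simp [mk_mul_mk]

theorem smod_prod {ι : Type} (s : Finset ι) (f : ι → Smax Γ) :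
    smod (∏ i ∈ s, f i) = ∑ i ∈ s, smod (f i) := by
  classical
  induction s using Finset.induction_on with
  | empty => rfl
  | insert i s hi ih => rw [Finset.prod_insert hi, Finset.sum_insert hi, smod_mul, ih]

theorem isBal_mul {a b : Smax Γ} : IsBal (a * b) ↔ IsBal a ∨ IsBal b := by
  obtain rfl | ⟨c, s, rfl⟩ := a.eq_zero_or_mk; · simp
  obtain rfl | ⟨d, t, rfl⟩ := b.eq_zero_or_mk; · simp
  cases s <;> cases t <;> simp [mk_mul_mk, sgnMul]

theorem isBal_prod {ι : Type} {s : Finset ι} {f : ι → Smax Γ} :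
    IsBal (∏ i ∈ s, f i) ↔ ∃ i ∈ s, IsBal (f i) := by
  classical
  induction s using Finset.induction_on with
  | empty => simp [one_eq_mk]
  | insert i s hi ih => simp [Finset.prod_insert hi, isBal_mul, ih]

theorem smod_permSignS {n : ℕ} (π : Equiv.Perm (Fin n)) : smod (permSignS π : Smax Γ) = 0 := by
  unfold permSignS; split_ifs <;> rfl

theorem permSignS_one {n : ℕ} : (permSignS (1 : Equiv.Perm (Fin n)) : Smax Γ) = 1 := by
  simp [permSignS]; rfl

end Multiplication

section Addition

variable {Γ : Type} [LinearOrder Γ]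

theorem sadd_comm (a b : Smax Γ) : sadd a b = sadd b a := by
  rcases a with _ | ⟨c, s⟩ <;> rcases b with _ | ⟨d, t⟩ <;> simp only [sadd] <;> grind

theorem sadd_assoc (a b c : Smax Γ) : sadd (sadd a b) c = sadd a (sadd b c) := by
  rcases a with _ | ⟨x, s⟩ <;> rcases b with _ | ⟨y, t⟩ <;> rcases c with _ | ⟨z, u⟩ <;>
    simp only [sadd] <;> (try split_ifs) <;> grind [sadd]

instance : Add (Smax Γ) := ⟨sadd⟩

instance : AddCommMonoid (Smax Γ) where
  add_assoc := sadd_assoc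
  zero_add _ := rfl
  add_zero a := by cases a <;> rfl
  add_comm := sadd_comm
  nsmul := nsmulRec

theorem sumS_eq_sum {α : Type} (l : List α) (f : α → Smax Γ) : sumS l f = (l.map f).sum := rfl

theorem mk_add_mk_of_lt {c d : Γ} (h : c < d) (s t : SSign) :
    Smax.mk c s + Smax.mk d t = Smax.mk d t :=
  if_pos h

theorem mk_add_mk_self (c : Γ) (s t : SSign) :
    Smax.mk c s + Smax.mk c t = Smax.mk c (if s = t then s else SSign.bal) :=
  (if_neg (lt_irrefl c)).trans (if_neg (lt_irrefl c))

theorem smod_add (a b : Smax Γ) : smod (a + b) = max (smod a) (smod b) := by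
  obtain rfl | ⟨c, s, rfl⟩ := a.eq_zero_or_mk; · simp
  obtain rfl | ⟨d, t, rfl⟩ := b.eq_zero_or_mk; · simp
  rcases lt_trichotomy c d with h | rfl | h
  · simp [mk_add_mk_of_lt h, h.le]
  · simp [mk_add_mk_self]
  · rw [add_comm, mk_add_mk_of_lt h]; simp [h.le]

theorem smod_ssub (a b : Smax Γ) : smod (ssub a b) = max (smod a) (smod b) := by
  rw [ssub, ← smod_sneg b]; exact smod_add a (sneg b)

theorem add_eq_left_of_smod_lt {a b : Smax Γ} (h : smod b < smod a) : a + b = a := by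
  obtain rfl | ⟨c, s, rfl⟩ := a.eq_zero_or_mk; · simp at h
  obtain rfl | ⟨d, t, rfl⟩ := b.eq_zero_or_mk; · simp
  rw [add_comm, mk_add_mk_of_lt (by simpa using h)]

theorem add_sum_eq_left {ι : Type} {s : Finset ι} {f : ι → Smax Γ} {a : Smax Γ}
    (h : ∀ i ∈ s, smod (f i) < smod a) : a + ∑ i ∈ s, f i = a := by
  classical
  induction s using Finset.induction_on with
  | empty => exact add_zero a
  | insert i s hi ih =>
    rw [Finset.sum_insert hi, add_left_comm, ih fun j hj => h j (Finset.mem_insert_of_mem hj),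
      add_comm, add_eq_left_of_smod_lt (h i (Finset.mem_insert_self i s))]

theorem mk_bal_add_of_smod_le {c : Γ} {b : Smax Γ} (h : smod b ≤ c) :
    Smax.mk c SSign.bal + b = Smax.mk c SSign.bal := by
  obtain rfl | ⟨d, t, rfl⟩ := b.eq_zero_or_mk; · simp
  rcases (WithBot.coe_le_coe.1 h).lt_or_eq with h | rfl
  · rw [add_comm, mk_add_mk_of_lt h]
  · rw [mk_add_mk_self]; cases t <;> rfl

theorem slt_zero_iff {q : Smax Γ} : slt szero q ↔ IsPos q ∧ q ≠ 0 := by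
  change IsPos (q + sneg 0) ∧ q + sneg 0 ≠ 0 ↔ _
  simp

theorem isBal_ssub_iff {a b : Smax Γ} (ha : IsSigned a) (hb : IsSigned b) :
    IsBal (ssub a b) ↔ a = b := by
  change IsBal (a + sneg b) ↔ a = b
  obtain rfl | ⟨c, s, rfl⟩ := a.eq_zero_or_mk <;> obtain rfl | ⟨d, t, rfl⟩ := b.eq_zero_or_mk
  · simp
  · cases t <;> simp_all [sneg_mk, SSign.flip]
  · simp_all
  · rcases lt_trichotomy c d with h | rfl | h
    · cases t <;> simp_all [sneg_mk, SSign.flip, mk_add_mk_of_lt h, h.ne]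
    · cases s <;> cases t <;> simp_all [sneg_mk, SSign.flip, mk_add_mk_self]
    · rw [sneg_mk, add_comm, mk_add_mk_of_lt h]; simp_all [h.ne']

end Addition

theorem sum_apply_perm_lt_sum_diag {ι M : Type} [Fintype ι] [AddCommMonoid M] [LinearOrder M]
    [IsOrderedCancelAddMonoid M] {w : ι → ι → WithBot M} (hdiag : ∀ i, w i i ≠ ⊥)
    (hoff : ∀ i j, i ≠ j → w i j + w i j < w i i + w j j) {π : Equiv.Perm ι} (hπ : π ≠ 1) :
    ∑ i, w i (π i) < ∑ i, w i i := by
  by_cases hbot : ∃ i, w i (π i) = ⊥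
  · rw [WithBot.sum_eq_bot_iff.2 (by simpa using hbot)]
    exact WithBot.sum_lt_bot fun i _ => hdiag i
  push Not at hbot
  choose a ha using fun i => WithBot.ne_bot_iff_exists.1 (hbot i)
  choose b hb using fun i => WithBot.ne_bot_iff_exists.1 (hdiag i)
  have hoff' : ∀ i, π i ≠ i → a i + a i < b i + b (π i) := fun i hi => by
    have := hoff i (π i) (Ne.symm hi)
    rw [← ha, ← hb, ← hb] at this
    exact_mod_cast this
  have hab : ∀ i, a i + a i ≤ b i + b (π i) := fun i => by
    by_cases hi : π i = i
    · have : a i = b i := WithBot.coe_injective (by rw [ha, hb, hi])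
      rw [hi, this]
    · exact (hoff' i hi).le
  obtain ⟨i₀, hi₀⟩ : ∃ i, π i ≠ i := by
    by_contra! h
    exact hπ (Equiv.ext h)
  have hlt : ∑ i, (a i + a i) < ∑ i, (b i + b (π i)) :=
    Finset.sum_lt_sum (fun i _ => hab i) ⟨i₀, Finset.mem_univ _, hoff' i₀ hi₀⟩
  rw [Finset.sum_add_distrib, Finset.sum_add_distrib, Equiv.sum_comp π b] at hlt
  simp_rw [← ha, ← hb]
  exact_mod_cast lt_of_not_ge fun h => hlt.not_ge (add_le_add h h)

section Matrices

variable {Γ : Type} [AddCommGroup Γ] [LinearOrder Γ] {n : ℕ}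

theorem detS_eq_sum (M : Matrix (Fin n) (Fin n) (Smax Γ)) :
    detS M = ∑ π : Equiv.Perm (Fin n), permSignS π * ∏ i, M i (π i) := by
  rw [detS, sumS_eq_sum, Finset.sum_map_toList]
  simp only [prodS_eq_prod]
  rfl

theorem quadFormS_eq_sum_of_support {A : Matrix (Fin n) (Fin n) (Smax Γ)} {x : Fin n → Smax Γ}
    {s : Finset (Fin n)} (hx : ∀ k ∉ s, x k = 0) :
    quadFormS A x = ∑ k ∈ s, ∑ l ∈ s, x k * (A k l * x l) := by
  simp only [quadFormS, sumS_eq_sum, ← Fin.sum_univ_def]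
  symm
  rw [Finset.sum_subset (Finset.subset_univ s) fun k _ hk => by simp [hx k hk]]
  exact Finset.sum_congr rfl fun k _ =>
    Finset.sum_subset (Finset.subset_univ s) fun l _ hl => by simp [hx l hl]

theorem charMatS_diag (x : Smax Γ) (A : Matrix (Fin n) (Fin n) (Smax Γ)) (i : Fin n) :
    charMatS x A i i = ssub x (A i i) := by
  change ssub (x * if i = i then 1 else 0) (A i i) = _
  rw [if_pos rfl, mul_one]

theorem charMatS_of_ne (x : Smax Γ) (A : Matrix (Fin n) (Fin n) (Smax Γ)) {i j : Fin n}
    (h : i ≠ j) : charMatS x A i j = sneg (A i j) := by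
  change ssub (x * if i = j then 1 else 0) (A i j) = _
  rw [if_neg h, mul_zero]
  rfl

theorem detS_eq_prod_diag {M : Matrix (Fin n) (Fin n) (Smax Γ)}
    (h : ∀ π : Equiv.Perm (Fin n), π ≠ 1 → ∑ i, smod (M i (π i)) < ∑ i, smod (M i i)) :
    detS M = ∏ i, M i i := by
  classical
  have hsmod : ∀ π, smod (permSignS π * ∏ i, M i (π i)) = ∑ i, smod (M i (π i)) := fun π => by
    rw [smod_mul, smod_permSignS, smod_prod, zero_add]
  rw [detS_eq_sum, ← Finset.add_sum_erase _ _ (Finset.mem_univ 1)]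
  simp only [permSignS_one, one_mul, Equiv.Perm.one_apply]
  refine add_sum_eq_left fun π hπ => ?_
  rw [hsmod, smod_prod]
  exact h π (Finset.ne_of_mem_erase hπ)

theorem TPD.exists_diag_eq_mk_pos {A : Matrix (Fin n) (Fin n) (Smax Γ)} (hA : TPD A)
    (i : Fin n) : ∃ d, A i i = Smax.mk d SSign.pos := by
  classical
  have hx : VecSigned (Pi.single i 1 : Fin n → Smax Γ) := fun k => by
    by_cases hk : k = i
    · subst hk; simp [one_eq_mk]
    · simp [hk]
  have hne : (Pi.single i 1 : Fin n → Smax Γ) ≠ zeroVecS := fun h => by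
    simpa [one_eq_mk] using congrFun h i
  have hq := hA _ hx hne
  rw [quadFormS_eq_sum_of_support (s := {i}) fun k hk => by simp [Finset.mem_singleton.not.1 hk]]
    at hq
  simp only [Finset.sum_singleton, Pi.single_eq_same, one_mul, mul_one, slt_zero_iff] at hq
  obtain h0 | ⟨d, s, hd⟩ := (A i i).eq_zero_or_mk
  · exact absurd h0 hq.2
  · rw [hd, isPos_mk] at hq
    exact ⟨d, by rw [hd, hq.1]⟩

variable [IsOrderedAddMonoid Γ]

theorem detS_charMatS {A : Matrix (Fin n) (Fin n) (Smax Γ)} (hdiag : ∀ i, A i i ≠ 0)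
    (hoff : ∀ i j, i ≠ j → smod (A i j) + smod (A i j) < smod (A i i) + smod (A j j))
    (x : Smax Γ) : detS (charMatS x A) = ∏ i, ssub x (A i i) := by
  have hdiag' : ∀ i, smod (charMatS x A i i) ≠ ⊥ := fun i => by
    simp [charMatS_diag, smod_ssub, smod_eq_bot_iff, hdiag i]
  have hoff' : ∀ i j, i ≠ j → smod (charMatS x A i j) + smod (charMatS x A i j) <
      smod (charMatS x A i i) + smod (charMatS x A j j) := fun i j hij => by
    rw [charMatS_of_ne x A hij, charMatS_diag, charMatS_diag, smod_sneg, smod_ssub, smod_ssub]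
    exact (hoff i j hij).trans_le (add_le_add (le_max_right _ _) (le_max_right _ _))
  rw [detS_eq_prod_diag fun π => sum_apply_perm_lt_sum_diag hdiag' hoff']
  simp only [charMatS_diag]

theorem TPD.smod_add_smod_lt_diag {A : Matrix (Fin n) (Fin n) (Smax Γ)} (hsym : SymmS A)
    (hA : TPD A) {i j : Fin n} (hij : i ≠ j) :
    smod (A i j) + smod (A i j) < smod (A i i) + smod (A j j) := by
  classical
  obtain ⟨di, hdi⟩ := hA.exists_diag_eq_mk_pos i
  obtain ⟨dj, hdj⟩ := hA.exists_diag_eq_mk_pos j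
  obtain h0 | ⟨s, σ, hs⟩ := (A i j).eq_zero_or_mk
  · rw [h0, hdi, hdj]; simp
  rw [hs, hdi, hdj]
  simp only [smod_mk]
  norm_cast
  by_contra! hle
  -- With `xᵢ = 𝟙` and `xⱼ` of modulus `dᵢ - s` and sign making `σ ⊙ τ` not positive, the two
  -- terms `xᵢ aᵢᵢ xᵢ` and `xᵢ aᵢⱼ xⱼ` of modulus `dᵢ` cancel to a balanced element, and `hle`
  -- keeps the other two terms at modulus `≤ dᵢ`.
  set τ := if σ = SSign.pos then SSign.neg else SSign.pos with hτ
  have hτ_signed : τ ≠ SSign.bal := by cases σ <;> simp [hτ]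
  have hστ : sgnMul σ τ ≠ SSign.pos := by cases σ <;> simp [hτ, sgnMul]
  let x : Fin n → Smax Γ := fun k => if k = i then 1 else if k = j then Smax.mk (di - s) τ else 0
  have hxi : x i = 1 := if_pos rfl
  have hxj : x j = Smax.mk (di - s) τ := by simp [x, hij.symm]
  have hx : VecSigned x := fun k => by
    by_cases hki : k = i
    · simp [hki, hxi, one_eq_mk]
    by_cases hkj : k = j
    · simp [hkj, hxj, hτ_signed]
    · simp [x, hki, hkj]
  have hne : x ≠ zeroVecS := fun h => by simpa [hxi, one_eq_mk] using congrFun h i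
  have hq := hA x hx hne
  rw [quadFormS_eq_sum_of_support (s := {i, j}) fun k hk => by simp_all [x], Finset.sum_pair hij,
    Finset.sum_pair hij, Finset.sum_pair hij, hxi, hxj, hsym j i, hdi, hdj, hs] at hq
  have hbal : 1 * (Smax.mk di SSign.pos * 1) + 1 * (Smax.mk s σ * Smax.mk (di - s) τ) =
      Smax.mk di SSign.bal := by
    rw [one_mul, mul_one, one_mul, mk_mul_mk, add_sub_cancel, mk_add_mk_self, if_neg hστ.symm]
  rw [hbal, mk_bal_add_of_smod_le, slt_zero_iff, isPos_mk] at hq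
  · exact absurd hq.1 nofun
  simp only [mul_one, mk_mul_mk, smod_add, smod_mk, max_le_iff]
  norm_cast
  constructor
  · rw [sub_add_cancel]
  · calc di - s + (dj + (di - s)) = di + dj - (s + s) + di := by abel
      _ ≤ di := add_le_of_nonpos_left (sub_nonpos.2 hle)

end Matrices

theorem smax_eigenvalues_of_tpd_general {Γ : Type} [AddCommGroup Γ] [LinearOrder Γ] [IsOrderedAddMonoid Γ]
    {n : ℕ}
    (A : Matrix (Fin n) (Fin n) (Smax Γ)) (hsym : SymmS A)
    (hTPD : TPD A) :
    (∀ γ : Smax Γ, IsSigned γ →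
      (IsBal (detS (charMatS γ A)) ↔ ∃ i : Fin n, γ = A i i)) ∧
    (∀ x : Smax Γ,
      detS (charMatS x A) = prodS (List.finRange n) (fun i => ssub x (A i i))) := by
  have hdiag := hTPD.exists_diag_eq_mk_pos
  have hdet : ∀ x, detS (charMatS x A) = prodS (List.finRange n) (fun i => ssub x (A i i)) := by
    intro x
    rw [prodS_eq_prod]
    refine detS_charMatS (fun i => ?_) (fun _ _ => hTPD.smod_add_smod_lt_diag hsym) x
    obtain ⟨d, hd⟩ := hdiag i
    simp [hd]
  refine ⟨fun γ hγ => ?_, hdet⟩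
  rw [hdet, prodS_eq_prod, isBal_prod]
  simp only [Finset.mem_univ, true_and]
  refine exists_congr fun i => isBal_ssub_iff hγ ?_
  obtain ⟨d, hd⟩ := hdiag i
  simp [hd]

/-- for a TPD matrix, the 𝕊max-eigenvalues (signed γ with
det(γ⊙I ⊖ A) ∇ 𝟘) are exactly the diagonal entries, and the characteristic
polynomial function factors through the diagonal entries. -/
theorem smax_eigenvalues_of_tpd {Γ : Type} [AddCommGroup Γ] [LinearOrder Γ] [IsOrderedAddMonoid Γ]
    [Nontrivial Γ] (hdiv : DivisibleGrp Γ) {n : ℕ}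
    (A : Matrix (Fin n) (Fin n) (Smax Γ)) (hsym : SymmS A) (hsgn : MatSigned A)
    (hTPD : TPD A) :
    (∀ γ : Smax Γ, IsSigned γ →
      (IsBal (detS (charMatS γ A)) ↔ ∃ i : Fin n, γ = A i i)) ∧
    (∀ x : Smax Γ,
      detS (charMatS x A) = prodS (List.finRange n) (fun i => ssub x (A i i))) :=
  smax_eigenvalues_of_tpd_general A hsym hTPD

end TropPaper
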